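/- With the data of the multiply warped example (k ≥ 2; positive integers r₁,…,r_k; n, C, L, ε, I; functions h₁,…,h_k, f, λ as defined), for every 1 ≤ i ≤ k and every s ∈ I one has −h_i''(s)/h_i(s) − (r_i − 1)·(h_i'(s)/h_i(s))² − (h_i'(s)/h_i(s))·Σ_{j ≠ i} r_j·h_j'(s)/h_j(s) + f'(s)·h_i'(s)/h_i(s) = λ(s). -/

import Mathlib

/-!
With `N = n - 1` and `aᵢ = i - C / N`, on `I` we have `cos (L s) ^ (-1/N) = exp (f s / N)`, so
`hᵢ = exp (aᵢ s + f / N)`. Hence `hᵢ'/hᵢ = aᵢ + f'/N` and `hᵢ''/hᵢ = f''/N + (hᵢ'/hᵢ)²`.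
Because `∑ rⱼ aⱼ = C - C = 0` and `∑ rⱼ = N`, the weighted sum `∑ⱼ rⱼ hⱼ'/hⱼ` is `f'`, and then
the left-hand side collapses to `-f''/N = -L² / (N cos² (L s)) = λ`.
-/

open Real Set

section ExpLogDeriv

variable {U : Set ℝ} {h u u' u'' : ℝ → ℝ}

theorem deriv_eq_of_eqOn_exp (hU : IsOpen U) (hh : EqOn h (fun x => exp (u x)) U)
    (hu : ∀ x ∈ U, HasDerivAt u (u' x) x) {x : ℝ} (hx : x ∈ U) :
    deriv h x = u' x * h x := by
  rw [(hh.eventuallyEq_of_mem (hU.mem_nhds hx)).deriv_eq, ((hu x hx).exp).deriv, hh hx, mul_comm]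

theorem deriv_deriv_eq_of_eqOn_exp (hU : IsOpen U) (hh : EqOn h (fun x => exp (u x)) U)
    (hu : ∀ x ∈ U, HasDerivAt u (u' x) x) (hu' : ∀ x ∈ U, HasDerivAt u' (u'' x) x)
    {x : ℝ} (hx : x ∈ U) :
    deriv (deriv h) x = (u'' x + u' x ^ 2) * h x := by
  have hdh : EqOn (deriv h) (fun y => u' y * exp (u y)) U := fun y hy => by
    rw [deriv_eq_of_eqOn_exp hU hh hu hy, hh hy]
  have hd := (hu' x hx).fun_mul (hu x hx).exp
  rw [(hdh.eventuallyEq_of_mem (hU.mem_nhds hx)).deriv_eq, hd.deriv, hh hx]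
  ring

end ExpLogDeriv

theorem cos_mul_pos_of_mem_Ioo {L s : ℝ} (hL : 0 < L)
    (hs : s ∈ Ioo (-(π / (2 * L))) (π / (2 * L))) : 0 < cos (L * s) := by
  apply cos_pos_of_mem_Ioo
  have h1 := mul_lt_mul_of_pos_left hs.1 hL
  have h2 := mul_lt_mul_of_pos_left hs.2 hL
  have hL2 : L * (π / (2 * L)) = π / 2 := by field_simp
  rw [mul_neg, hL2] at h1
  rw [hL2] at h2
  exact ⟨h1, h2⟩

theorem hasDerivAt_neg_log_cos_mul {L x : ℝ} (hx : cos (L * x) ≠ 0) :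
    HasDerivAt (fun y => -log (cos (L * y))) (L * tan (L * x)) x := by
  refine ((hasDerivAt_const_mul L).cos.log hx).neg.congr_deriv ?_
  rw [tan_eq_sin_div_cos]
  ring

theorem hasDerivAt_mul_tan_mul {L x : ℝ} (hx : cos (L * x) ≠ 0) :
    HasDerivAt (fun y => L * tan (L * y)) (L ^ 2 / cos (L * x) ^ 2) x := by
  refine (((hasDerivAt_tan hx).comp x (hasDerivAt_const_mul L)).const_mul L).congr_deriv ?_
  ring

theorem exp_mul_rpow_neg_one_div {c : ℝ} (hc : 0 < c) (b N : ℝ) :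
    exp b * c ^ (-(1 / N)) = exp (b + -log c / N) := by
  rw [rpow_def_of_pos hc, ← exp_add]
  ring_nf

section WarpingFunction

variable {U : Set ℝ} {g : ℝ → ℝ} {a L N : ℝ}

theorem eqOn_exp_of_eqOn_exp_mul_cos_rpow (hcos : ∀ x ∈ U, 0 < cos (L * x))
    (hg : EqOn g (fun x => exp (a * x) * cos (L * x) ^ (-(1 / N))) U) :
    EqOn g (fun x => exp (a * x + -log (cos (L * x)) / N)) U := fun x hx =>
  (hg hx).trans (exp_mul_rpow_neg_one_div (hcos x hx) _ _)

theorem hasDerivAt_mul_add_neg_log_cos_mul_div {x : ℝ} (hx : cos (L * x) ≠ 0) :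
    HasDerivAt (fun y => a * y + -log (cos (L * y)) / N) (a + L * tan (L * x) / N) x :=
  (hasDerivAt_const_mul a).add ((hasDerivAt_neg_log_cos_mul hx).div_const N)

variable (hU : IsOpen U) (hcos : ∀ x ∈ U, 0 < cos (L * x))
  (hg : EqOn g (fun x => exp (a * x) * cos (L * x) ^ (-(1 / N))) U)
include hU hcos hg

theorem deriv_div_eq_of_eqOn_exp_mul_cos_rpow {x : ℝ} (hx : x ∈ U) :
    deriv g x / g x = a + L * tan (L * x) / N := by
  have hexp := eqOn_exp_of_eqOn_exp_mul_cos_rpow hcos hg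
  have hgx : g x ≠ 0 := by rw [hexp hx]; positivity
  rw [deriv_eq_of_eqOn_exp hU hexp (fun y hy => hasDerivAt_mul_add_neg_log_cos_mul_div
    (hcos y hy).ne') hx, mul_div_cancel_right₀ _ hgx]

theorem deriv_deriv_div_eq_of_eqOn_exp_mul_cos_rpow {x : ℝ} (hx : x ∈ U) :
    deriv (deriv g) x / g x = L ^ 2 / cos (L * x) ^ 2 / N + (a + L * tan (L * x) / N) ^ 2 := by
  have hexp := eqOn_exp_of_eqOn_exp_mul_cos_rpow hcos hg
  have hgx : g x ≠ 0 := by rw [hexp hx]; positivity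
  rw [deriv_deriv_eq_of_eqOn_exp hU hexp
    (fun y hy => hasDerivAt_mul_add_neg_log_cos_mul_div (hcos y hy).ne')
    (fun y hy => ((hasDerivAt_mul_tan_mul (hcos y hy).ne').div_const N).const_add a) hx,
    mul_div_cancel_right₀ _ hgx]

end WarpingFunction

theorem Finset.sum_mul_sub_div_add {ι : Type*} (S : Finset ι) (r x : ι → ℝ) {C N : ℝ}
    (hC : C = ∑ j ∈ S, r j * x j) (hN : N = ∑ j ∈ S, r j) (hN0 : N ≠ 0) (c : ℝ) :
    ∑ j ∈ S, r j * (x j - C / N + c) = N * c := by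
  simp only [mul_add, mul_sub, Finset.sum_add_distrib, Finset.sum_sub_distrib, ← Finset.sum_mul,
    ← hC, ← hN]
  field_simp
  ring

theorem warped_fiber_identity {ι : Type*} [DecidableEq ι] {S : Finset ι} {i : ι} (hi : i ∈ S)
    (r v : ι → ℝ) {F : ℝ} (hF : ∑ j ∈ S, r j * v j = F) (D : ℝ) :
    -(D + v i ^ 2) - (r i - 1) * v i ^ 2 - v i * ∑ j ∈ S.erase i, r j * v j + F * v i = -D := by
  rw [← Finset.sum_erase_add S _ hi] at hF
  linear_combination -v i * hF

theorem stmt_14_general (k : ℕ) (r : ℕ → ℕ)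
    (n : ℕ) (hn : n = (∑ j ∈ Finset.Icc 1 k, r j) + 1)
    (C L ε : ℝ) (hC : C = ∑ j ∈ Finset.Icc 1 k, (r j : ℝ) * (j : ℝ))
    (hL2 : 0 < ((n : ℝ) - 1) * (∑ j ∈ Finset.Icc 1 k, (r j : ℝ) * (j : ℝ) ^ 2) - C ^ 2)
    (hL : L = Real.sqrt
      (((n : ℝ) - 1) * (∑ j ∈ Finset.Icc 1 k, (r j : ℝ) * (j : ℝ) ^ 2) - C ^ 2))
    (hε : ε = Real.pi / (2 * L))
    (h : ℕ → ℝ → ℝ) (f lam : ℝ → ℝ)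
    (hh : ∀ i ∈ Finset.Icc 1 k, ∀ s ∈ Set.Ioo (-ε) ε,
      h i s = Real.exp (((i : ℝ) - C / ((n : ℝ) - 1)) * s)
        * Real.cos (L * s) ^ (-(1 / ((n : ℝ) - 1))))
    (hf : ∀ s ∈ Set.Ioo (-ε) ε, f s = -Real.log (Real.cos (L * s)))
    (hlam : ∀ s ∈ Set.Ioo (-ε) ε,
      lam s = -L ^ 2 / (((n : ℝ) - 1) * Real.cos (L * s) ^ 2)) :
    ∀ i ∈ Finset.Icc 1 k, ∀ s ∈ Set.Ioo (-ε) ε,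
      -(deriv (deriv (h i)) s / h i s)
        - ((r i : ℝ) - 1) * (deriv (h i) s / h i s) ^ 2
        - (deriv (h i) s / h i s)
          * (∑ j ∈ (Finset.Icc 1 k).erase i, (r j : ℝ) * deriv (h j) s / h j s)
        + deriv f s * (deriv (h i) s / h i s)
        = lam s := by
  intro i hi s hs
  set N : ℝ := (n : ℝ) - 1
  have hN : N = ∑ j ∈ Finset.Icc 1 k, (r j : ℝ) := by simp [N, hn]
  have hN0 : N ≠ 0 := fun hN0 => by
    rw [hN0] at hL2
    nlinarith [sq_nonneg C]
  have hcos : ∀ x ∈ Ioo (-ε) ε, 0 < cos (L * x) := fun x hx =>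
    cos_mul_pos_of_mem_Ioo (hL ▸ sqrt_pos.mpr hL2) (hε ▸ hx)
  have hexp : ∀ j ∈ Finset.Icc 1 k, EqOn (h j)
      (fun x => exp (((j : ℝ) - C / N) * x) * cos (L * x) ^ (-(1 / N))) (Ioo (-ε) ε) :=
    fun j hj x hx => hh j hj x hx
  have hlog : ∀ j ∈ Finset.Icc 1 k,
      deriv (h j) s / h j s = ((j : ℝ) - C / N) + L * tan (L * s) / N := fun j hj =>
    deriv_div_eq_of_eqOn_exp_mul_cos_rpow isOpen_Ioo hcos (hexp j hj) hs
  have hsum : ∑ j ∈ Finset.Icc 1 k, (r j : ℝ) * (((j : ℝ) - C / N) + L * tan (L * s) / N)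
      = L * tan (L * s) := by
    rw [Finset.sum_mul_sub_div_add _ _ _ hC hN hN0]
    field_simp
  have hf' : deriv f s = L * tan (L * s) := by
    have hfI : EqOn f (fun x => -log (cos (L * x))) (Ioo (-ε) ε) := hf
    rw [(hfI.eventuallyEq_of_mem (isOpen_Ioo.mem_nhds hs)).deriv_eq,
      (hasDerivAt_neg_log_cos_mul (hcos s hs).ne').deriv]
  rw [deriv_deriv_div_eq_of_eqOn_exp_mul_cos_rpow isOpen_Ioo hcos (hexp i hi) hs, hlog i hi,
    Finset.sum_congr rfl fun j hj => by rw [mul_div_assoc, hlog j (Finset.mem_of_mem_erase hj)],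
    hf', warped_fiber_identity hi _ (fun j => ((j : ℝ) - C / N) + L * tan (L * s) / N) hsum,
    hlam s hs]
  field_simp

/-- In the multiply warped example, the i-th fiber almost Ricci
soliton equation −h_i''/h_i − (r_i−1)(h_i'/h_i)² − (h_i'/h_i)·Σ_{j≠i} r_j·h_j'/h_j
+ f'·h_i'/h_i = λ holds on I for every 1 ≤ i ≤ k. -/
theorem stmt_14 (k : ℕ) (hk : 2 ≤ k) (r : ℕ → ℕ)
    (hr : ∀ j ∈ Finset.Icc 1 k, 0 < r j)
    (n : ℕ) (hn : n = (∑ j ∈ Finset.Icc 1 k, r j) + 1)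
    (C L ε : ℝ) (hC : C = ∑ j ∈ Finset.Icc 1 k, (r j : ℝ) * (j : ℝ))
    (hL2 : 0 < ((n : ℝ) - 1) * (∑ j ∈ Finset.Icc 1 k, (r j : ℝ) * (j : ℝ) ^ 2) - C ^ 2)
    (hL : L = Real.sqrt
      (((n : ℝ) - 1) * (∑ j ∈ Finset.Icc 1 k, (r j : ℝ) * (j : ℝ) ^ 2) - C ^ 2))
    (hε : ε = Real.pi / (2 * L))
    (h : ℕ → ℝ → ℝ) (f lam : ℝ → ℝ)
    (hh : ∀ i ∈ Finset.Icc 1 k, ∀ s ∈ Set.Ioo (-ε) ε,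
      h i s = Real.exp (((i : ℝ) - C / ((n : ℝ) - 1)) * s)
        * Real.cos (L * s) ^ (-(1 / ((n : ℝ) - 1))))
    (hf : ∀ s ∈ Set.Ioo (-ε) ε, f s = -Real.log (Real.cos (L * s)))
    (hlam : ∀ s ∈ Set.Ioo (-ε) ε,
      lam s = -L ^ 2 / (((n : ℝ) - 1) * Real.cos (L * s) ^ 2)) :
    ∀ i ∈ Finset.Icc 1 k, ∀ s ∈ Set.Ioo (-ε) ε,
      -(deriv (deriv (h i)) s / h i s)
        - ((r i : ℝ) - 1) * (deriv (h i) s / h i s) ^ 2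
        - (deriv (h i) s / h i s)
          * (∑ j ∈ (Finset.Icc 1 k).erase i, (r j : ℝ) * deriv (h j) s / h j s)
        + deriv f s * (deriv (h i) s / h i s)
        = lam s :=
  stmt_14_general k r n hn C L ε hC hL2 hL hε h f lam hh hf hlam
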